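/- There exists {c_k}_{k∈ℤ} such that the one-sided sequence supported on k ≤ 0 fails GM-bar, the one-sided sequence supported on k ≥ 0 satisfies GM-bar, and the full two-sided sequence {c_k}_{k∈ℤ} satisfies GM-bar. Concretely: c_k = (2/3)^n for 2^n ≤ k < 2^{n+1} (n ≥ 0); c_{−2^n} = (2/3)^n (n ≥ 0); c_k = 0 for −2^{n+1} < k < −2^n and for k = 0. Then {c_k}_{k≤0} ∉ GM-bar while {c_k}_{k∈ℤ} ∈ GM-bar. -/

import Mathlib

open scoped ENNReal BigOperators

/-- The symmetric difference `|Δa_m|`. -/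
noncomputable def symDiff (a : ℤ → ℂ) (m : ℤ) : ℝ :=
  if 0 < m then ‖a m - a (m + 1)‖
  else if m < 0 then ‖a m - a (m - 1)‖
  else ‖a 0 - a 1‖ + ‖a 0 - a (-1)‖

/-- `⌊2^{k-1}⌋`. -/
def dyadLo (k : ℕ) : ℤ := if k = 0 then 0 else 2 ^ (k - 1)

/-- `Θ_n(a) = ∑_{⌊2^{n-1}⌋ ≤ |m| < 2^n} |Δa_m|`. -/
noncomputable def Theta (a : ℤ → ℂ) (k : ℕ) : ℝ :=
  ∑ m ∈ (Finset.Icc (-(2 ^ k : ℤ) + 1) ((2 ^ k : ℤ) - 1)).filter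
      (fun m => dyadLo k ≤ |m|), symDiff a m

/-- The partial sum `∑_{j=0}^{m} a_j`, interpreted as `∑_{j=m}^{0} a_j`
when `m < 0`. -/
noncomputable def psum (a : ℤ → ℂ) (m : ℤ) : ℂ :=
  ∑ j ∈ Finset.Icc (min m 0) (max m 0), a j

/-- `â_{2^k} = sup_{2^k ≤ |m| < 2^{k+1}} (1/(|m|+1)) |∑_{j=0}^{m} a_j|`. -/
noncomputable def hatAvg (a : ℤ → ℂ) (k : ℕ) : ℝ≥0∞ :=
  ⨆ (m : ℤ) (_ : (2 ^ k : ℤ) ≤ |m| ∧ |m| < 2 ^ (k + 1)),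
    ENNReal.ofReal (‖psum a m‖ / ((m.natAbs : ℝ) + 1))

/-- The class `GM-bar` with constant `C`: for every `n ≥ 0`,
`∑_{⌊2^{n-1}⌋ ≤ |m| < 2^n} |Δa_m| ≤ C · sup_{k≥0} min(1, 2^{k-n}) â_{2^k}`. -/
def GMBarWith (C : ℝ) (a : ℤ → ℂ) : Prop :=
  ∀ n : ℕ, ENNReal.ofReal (Theta a n) ≤
    ENNReal.ofReal C *
      ⨆ k : ℕ, min 1 ((2 : ℝ≥0∞) ^ ((k : ℝ) - (n : ℝ))) * hatAvg a k

/-- The class `GM-bar`. -/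
def GMBar (a : ℤ → ℂ) : Prop := ∃ C : ℝ, 0 < C ∧ GMBarWith C a

/-- `c_k = (2/3)^n` for `2^n ≤ k < 2^{n+1}` (`n ≥ 0`); `c_{-2^n} = (2/3)^n`
(`n ≥ 0`); `c_k = 0` for `-2^{n+1} < k < -2^n` and for `k = 0`. -/
noncomputable def cTwoSided : ℤ → ℂ := fun k =>
  if 0 < k then ((2 / 3 : ℂ)) ^ (Nat.log 2 k.toNat)
  else if k = 0 then 0
  else if (2 : ℕ) ^ (Nat.log 2 (-k).toNat) = (-k).toNat then
    ((2 / 3 : ℂ)) ^ (Nat.log 2 (-k).toNat)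
  else 0

open Finset

/-!
On the negative side the sequence lives on `{-2^n}`: its variation over the `n`-th dyadic shell
is of order `(2/3)^n`, while its partial sums stay below `∑ (2/3)^i = 3`, so that
`ĉ_{2^k} = O(2^{-k})` and the GM-bar inequality would force `(2/3)^n = O(2^{-n})`.
On the positive side the sequence equals `(2/3)^n` on all of `[2^n, 2^{n+1})`, which gives
`ĉ_{2^n} ≥ (2/3)^n / 2`; since the variation over both halves of the shell
`2^{n-1} ≤ |m| < 2^n` is `O((2/3)^n)`, the term `k = n` of the supremum already yields GM-bar,
for the positive part and for the two-sided sequence alike.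
-/

lemma Theta_zero (a : ℤ → ℂ) : Theta a 0 = symDiff a 0 := by
  have : (Icc (-(2 ^ 0 : ℤ) + 1) (2 ^ 0 - 1)).filter (fun m => dyadLo 0 ≤ |m|) = {0} := by
    decide
  rw [Theta, this, sum_singleton]

lemma sum_filter_le_abs_eq_sum_Ico {M : Type*} [AddCommMonoid M] (f : ℤ → M) {lo hi : ℕ}
    (hlo : 0 < lo) :
    ∑ m ∈ (Icc (-(hi : ℤ) + 1) (hi - 1)).filter (fun m => (lo : ℤ) ≤ |m|), f m =
      ∑ m ∈ Ico lo hi, (f m + f (-m)) := by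
  set pos := (Ico lo hi).map (Nat.castEmbedding : ℕ ↪ ℤ)
  set neg := (Ico lo hi).map (Nat.castEmbedding.trans (Equiv.neg ℤ).toEmbedding)
  have hdisj : Disjoint pos neg := by
    simp only [pos, neg, disjoint_left, mem_map, mem_Ico, Nat.castEmbedding_apply,
      Function.Embedding.trans_apply, Equiv.toEmbedding_apply, Equiv.neg_apply]
    rintro _ ⟨j, hj, rfl⟩ ⟨k, hk, h⟩
    omega
  have hshell : (Icc (-(hi : ℤ) + 1) (hi - 1)).filter (fun m => (lo : ℤ) ≤ |m|) =
      pos.disjUnion neg hdisj := by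
    ext m
    simp only [pos, neg, mem_filter, mem_Icc, mem_disjUnion, mem_map, mem_Ico,
      Nat.castEmbedding_apply, Function.Embedding.trans_apply, Equiv.toEmbedding_apply,
      Equiv.neg_apply]
    rcases le_or_gt 0 m with hm | hm
    · rw [abs_of_nonneg hm]
      constructor
      · rintro ⟨⟨-, h⟩, h'⟩; left; exact ⟨m.toNat, by omega⟩
      · rintro (⟨j, h, rfl⟩ | ⟨j, h, rfl⟩) <;> omega
    · rw [abs_of_neg hm]
      constructor
      · rintro ⟨⟨h, -⟩, h'⟩; right; exact ⟨(-m).toNat, by omega⟩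
      · rintro (⟨j, h, rfl⟩ | ⟨j, h, rfl⟩) <;> omega
  rw [hshell, sum_disjUnion, sum_map, sum_map, sum_add_distrib]
  rfl

lemma Theta_succ_eq_sum (a : ℤ → ℂ) (u v : ℕ → ℝ) (hu : ∀ m : ℕ, 0 < m → a m = u m)
    (hv : ∀ m : ℕ, 0 < m → a (-m) = v m) (n : ℕ) :
    Theta a (n + 1) =
      ∑ m ∈ Ico (2 ^ n) (2 ^ (n + 1)), (|u m - u (m + 1)| + |v m - v (m + 1)|) := by
  have hlo : 0 < 2 ^ n := by positivity
  have hshell := sum_filter_le_abs_eq_sum_Ico (symDiff a) (hi := 2 ^ (n + 1)) hlo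
  push_cast at hshell
  rw [Theta, dyadLo, if_neg n.succ_ne_zero, Nat.add_sub_cancel, hshell]
  refine sum_congr rfl fun m hm => ?_
  have hm0 : 0 < m := hlo.trans_le (mem_Ico.1 hm).1
  have hm0' : (0 : ℤ) < m := by exact_mod_cast hm0
  rw [symDiff, if_pos hm0', symDiff, if_neg (by omega), if_pos (by omega),
    show (m : ℤ) + 1 = (m + 1 : ℕ) by push_cast; rfl,
    show -(m : ℤ) - 1 = -(m + 1 : ℕ) by push_cast; ring,
    hu m hm0, hu (m + 1) m.succ_pos, hv m hm0, hv (m + 1) m.succ_pos,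
    ← Complex.ofReal_sub, ← Complex.ofReal_sub, Complex.norm_real, Complex.norm_real,
    Real.norm_eq_abs, Real.norm_eq_abs]

lemma Antitone.sum_Ico_abs_sub {f : ℕ → ℝ} (hf : Antitone f) {a b : ℕ} (hab : a ≤ b) :
    ∑ i ∈ Ico a b, |f i - f (i + 1)| = f a - f b := by
  rw [sum_congr rfl fun i _ => abs_of_nonneg (sub_nonneg.2 (hf i.le_succ)),
    ← neg_sub (f b), ← sum_Ico_sub (f := f) hab, ← sum_neg_distrib]
  simp only [neg_sub]

lemma psum_natCast (a : ℤ → ℂ) (m : ℕ) : psum a m = ∑ j ∈ range (m + 1), a j := by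
  rw [psum, min_eq_right (Nat.cast_nonneg m), max_eq_left (Nat.cast_nonneg m),
    Int.Icc_eq_finset_map, sum_map]
  simp

lemma ofReal_div_two_le_hatAvg (a : ℤ → ℂ) (n : ℕ) (x : ℝ)
    (hre : ∀ j : ℕ, j < 2 ^ n → 0 ≤ (a j).re)
    (hblock : ∀ j : ℕ, 2 ^ n ≤ j → j < 2 ^ (n + 1) → a j = x) :
    ENNReal.ofReal (x / 2) ≤ hatAvg a n := by
  obtain ⟨m, hm⟩ : ∃ m : ℕ, m + 1 = 2 ^ (n + 1) := ⟨_, Nat.sub_add_cancel Nat.one_le_two_pow⟩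
  have hmem : (2 ^ n : ℤ) ≤ |(m : ℤ)| ∧ |(m : ℤ)| < 2 ^ (n + 1) := by
    have hm' : (m : ℤ) + 1 = 2 ^ (n + 1) := by exact_mod_cast hm
    have h₁ : (1 : ℤ) ≤ 2 ^ n := one_le_pow₀ one_le_two
    rw [abs_of_nonneg m.cast_nonneg]
    constructor <;> linarith [pow_succ (2 : ℤ) n]
  have hsum : 2 ^ n * x ≤ (psum a m).re := by
    rw [psum_natCast, hm, Complex.re_sum,
      ← sum_range_add_sum_Ico _ (Nat.pow_le_pow_right two_pos n.le_succ)]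
    have hlow : 0 ≤ ∑ j ∈ range (2 ^ n), (a j).re :=
      sum_nonneg fun j hj => hre j (mem_range.1 hj)
    have hblk : ∑ j ∈ Ico (2 ^ n : ℕ) (2 ^ (n + 1)), (a j).re = 2 ^ n * x := by
      rw [sum_congr rfl fun j hj => by rw [hblock j (mem_Ico.1 hj).1 (mem_Ico.1 hj).2,
        Complex.ofReal_re], sum_const, Nat.card_Ico, nsmul_eq_mul, pow_succ, Nat.mul_two,
        Nat.add_sub_cancel]
      push_cast; ring
    linarith
  have hden : ((m : ℤ).natAbs : ℝ) + 1 = 2 ^ (n + 1) := by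
    rw [Int.natAbs_natCast]; exact_mod_cast hm
  refine le_trans (ENNReal.ofReal_le_ofReal ?_) (le_iSup₂ (f := fun (m : ℤ) _ =>
    ENNReal.ofReal (‖psum a m‖ / ((m.natAbs : ℝ) + 1))) (m : ℤ) hmem)
  rw [hden, le_div_iff₀ (by positivity)]
  calc x / 2 * 2 ^ (n + 1) = 2 ^ n * x := by ring
    _ ≤ (psum a m).re := hsum
    _ ≤ ‖psum a m‖ := Complex.re_le_norm _

lemma hatAvg_le_of_hasSum_norm (a : ℤ → ℂ) {B : ℝ} (hB : HasSum (fun j => ‖a j‖) B) (k : ℕ) :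
    hatAvg a k ≤ ENNReal.ofReal (B / 2 ^ k) := by
  refine iSup₂_le fun m hm => ENNReal.ofReal_le_ofReal ?_
  have hpsum : ‖psum a m‖ ≤ B :=
    (norm_sum_le _ _).trans (sum_le_hasSum _ (fun _ _ => norm_nonneg _) hB)
  have hden : (2 : ℝ) ^ k ≤ (m.natAbs : ℝ) + 1 := by
    have : ((2 ^ k : ℤ) : ℝ) ≤ (|m| : ℤ) := Int.cast_le.2 hm.1
    rw [Nat.cast_natAbs]
    push_cast at this ⊢
    linarith
  exact div_le_div₀ ((norm_nonneg _).trans hpsum) hpsum (by positivity) hden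

lemma min_one_rpow_mul_le (B : ℝ) (k n : ℕ) :
    min 1 ((2 : ℝ≥0∞) ^ ((k : ℝ) - n)) * ENNReal.ofReal (B / 2 ^ k) ≤
      ENNReal.ofReal (B / 2 ^ n) := by
  have h2 : (2 : ℝ≥0∞) ^ ((k : ℝ) - n) = ENNReal.ofReal (2 ^ ((k : ℝ) - n)) := by
    rw [← ENNReal.ofReal_rpow_of_pos two_pos, ENNReal.ofReal_ofNat]
  calc min 1 ((2 : ℝ≥0∞) ^ ((k : ℝ) - n)) * ENNReal.ofReal (B / 2 ^ k)
      ≤ (2 : ℝ≥0∞) ^ ((k : ℝ) - n) * ENNReal.ofReal (B / 2 ^ k) := by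
        gcongr; exact min_le_right _ _
    _ = ENNReal.ofReal (2 ^ ((k : ℝ) - n) * (B / 2 ^ k)) := by
      rw [h2, ENNReal.ofReal_mul (by positivity)]
    _ = ENNReal.ofReal (B / 2 ^ n) := by
      rw [Real.rpow_sub two_pos, Real.rpow_natCast, Real.rpow_natCast]
      field_simp

lemma GMBarWith.Theta_le_of_hasSum_norm {C B : ℝ} {a : ℤ → ℂ} (h : GMBarWith C a)
    (hC : 0 ≤ C) (hB : HasSum (fun j => ‖a j‖) B) (n : ℕ) : Theta a n ≤ C * B / 2 ^ n := by
  have hB0 : 0 ≤ B := hB.nonneg fun _ => norm_nonneg _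
  have hsup : ⨆ k : ℕ, min 1 ((2 : ℝ≥0∞) ^ ((k : ℝ) - n)) * hatAvg a k ≤
      ENNReal.ofReal (B / 2 ^ n) :=
    iSup_le fun k => le_trans (by gcongr; exact hatAvg_le_of_hasSum_norm a hB k)
      (min_one_rpow_mul_le B k n)
  have := (h n).trans (mul_le_mul' le_rfl hsup)
  rwa [← ENNReal.ofReal_mul hC, ENNReal.ofReal_le_ofReal_iff (by positivity), ← mul_div_assoc]
    at this

lemma gmBarWith_of_Theta_le {C : ℝ} {a : ℤ → ℂ} (x : ℕ → ℝ) (hC : 0 ≤ C)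
    (hTheta : ∀ n, Theta a n ≤ C * x n) (hhat : ∀ n, ENNReal.ofReal (x n) ≤ hatAvg a n) :
    GMBarWith C a := by
  intro n
  calc ENNReal.ofReal (Theta a n) ≤ ENNReal.ofReal C * ENNReal.ofReal (x n) := by
        rw [← ENNReal.ofReal_mul hC]; exact ENNReal.ofReal_le_ofReal (hTheta n)
    _ ≤ ENNReal.ofReal C * hatAvg a n := by gcongr; exact hhat n
    _ ≤ _ := by
      gcongr
      refine le_trans (le_of_eq ?_) (le_iSup _ n)
      rw [sub_self, ENNReal.rpow_zero, min_self, one_mul]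

noncomputable def dyadicDecay (m : ℕ) : ℝ := (2 / 3) ^ Nat.log 2 m

noncomputable def dyadicSpike (m : ℕ) : ℝ :=
  if 2 ^ Nat.log 2 m = m then (2 / 3) ^ Nat.log 2 m else 0

lemma dyadicDecay_antitone : Antitone dyadicDecay := fun _ _ h =>
  pow_le_pow_of_le_one (by norm_num) (by norm_num) (Nat.log_mono_right h)

lemma dyadicDecay_of_mem {n m : ℕ} (h₁ : 2 ^ n ≤ m) (h₂ : m < 2 ^ (n + 1)) :
    dyadicDecay m = (2 / 3) ^ n := by
  rw [dyadicDecay, Nat.log_eq_of_pow_le_of_lt_pow h₁ h₂]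

lemma dyadicSpike_of_mem {n m : ℕ} (h₁ : 2 ^ n ≤ m) (h₂ : m < 2 ^ (n + 1)) :
    dyadicSpike m = if m = 2 ^ n then (2 / 3) ^ n else 0 := by
  simp only [dyadicSpike, Nat.log_eq_of_pow_le_of_lt_pow h₁ h₂, eq_comm]

lemma dyadicSpike_two_pow (n : ℕ) : dyadicSpike (2 ^ n) = (2 / 3) ^ n := by
  simp [dyadicSpike, Nat.log_pow]

lemma dyadicSpike_nonneg (m : ℕ) : 0 ≤ dyadicSpike m := by
  unfold dyadicSpike; split_ifs <;> positivity

lemma sum_abs_sub_dyadicDecay (n : ℕ) :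
    ∑ m ∈ Ico (2 ^ n) (2 ^ (n + 1)), |dyadicDecay m - dyadicDecay (m + 1)| =
      (2 / 3) ^ n / 3 := by
  rw [dyadicDecay_antitone.sum_Ico_abs_sub (Nat.pow_le_pow_right two_pos n.le_succ),
    dyadicDecay_of_mem le_rfl (Nat.pow_lt_pow_succ one_lt_two),
    dyadicDecay_of_mem le_rfl (Nat.pow_lt_pow_succ one_lt_two), pow_succ]
  ring

lemma sum_dyadicSpike (n : ℕ) :
    ∑ m ∈ Ico (2 ^ n) (2 ^ (n + 1)), dyadicSpike m = (2 / 3) ^ n := by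
  rw [sum_congr rfl fun m hm => dyadicSpike_of_mem (mem_Ico.1 hm).1 (mem_Ico.1 hm).2,
    sum_ite_eq', if_pos (left_mem_Ico.2 (Nat.pow_lt_pow_succ one_lt_two))]

lemma sum_dyadicSpike_succ (n : ℕ) :
    ∑ m ∈ Ico (2 ^ n) (2 ^ (n + 1)), dyadicSpike (m + 1) = (2 / 3) ^ (n + 1) := by
  have hlt : 2 ^ n < 2 ^ (n + 1) := Nat.pow_lt_pow_succ one_lt_two
  rw [sum_Ico_add', sum_Ico_succ_top (by omega), dyadicSpike_two_pow, add_eq_right]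
  refine sum_eq_zero fun m hm => ?_
  rw [mem_Ico] at hm
  rw [dyadicSpike_of_mem (n := n) (by omega) hm.2, if_neg (by omega)]

lemma sum_abs_sub_dyadicSpike_le (n : ℕ) :
    ∑ m ∈ Ico (2 ^ n) (2 ^ (n + 1)), |dyadicSpike m - dyadicSpike (m + 1)| ≤
      (2 / 3) ^ n + (2 / 3) ^ (n + 1) := by
  calc _ ≤ ∑ m ∈ Ico (2 ^ n) (2 ^ (n + 1)), (dyadicSpike m + dyadicSpike (m + 1)) := by
        refine sum_le_sum fun m _ => abs_sub_le_iff.2 ⟨?_, ?_⟩ <;>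
          linarith [dyadicSpike_nonneg m, dyadicSpike_nonneg (m + 1)]
    _ = _ := by rw [sum_add_distrib, sum_dyadicSpike, sum_dyadicSpike_succ]

lemma le_sum_abs_sub_dyadicSpike (n : ℕ) :
    (2 / 3) ^ (n + 1) ≤
      ∑ m ∈ Ico (2 ^ (n + 1)) (2 ^ (n + 2)), |dyadicSpike m - dyadicSpike (m + 1)| := by
  have h₁ : 1 ≤ 2 ^ n := Nat.one_le_two_pow
  have hnext : dyadicSpike (2 ^ (n + 1) + 1) = 0 := by
    rw [dyadicSpike_of_mem (n := n + 1) (by omega) (by rw [pow_succ 2 (n + 1), pow_succ]; omega),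
      if_neg (by omega)]
  calc (2 / 3 : ℝ) ^ (n + 1)
        = |dyadicSpike (2 ^ (n + 1)) - dyadicSpike (2 ^ (n + 1) + 1)| := by
        rw [dyadicSpike_two_pow, hnext, sub_zero, abs_of_nonneg (by positivity)]
    _ ≤ _ := single_le_sum (f := fun m => |dyadicSpike m - dyadicSpike (m + 1)|)
        (fun m _ => abs_nonneg _)
        (left_mem_Ico.2 (Nat.pow_lt_pow_succ one_lt_two))

lemma cTwoSided_zero : cTwoSided 0 = 0 := by simp [cTwoSided]

lemma cTwoSided_natCast {m : ℕ} (hm : 0 < m) : cTwoSided m = dyadicDecay m := by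
  simp [cTwoSided, dyadicDecay, hm]

lemma cTwoSided_neg_natCast (m : ℕ) : cTwoSided (-m) = dyadicSpike m := by
  rcases m.eq_zero_or_pos with rfl | hm
  · simp [cTwoSided, dyadicSpike]
  · have : ¬ (0 : ℤ) < -m := by omega
    simp only [cTwoSided, this, if_false, neg_eq_zero, Nat.cast_eq_zero, hm.ne', neg_neg,
      Int.toNat_natCast, dyadicSpike]
    split_ifs <;> simp

noncomputable def cNonneg : ℤ → ℂ := fun k => if 0 ≤ k then cTwoSided k else 0

noncomputable def cNonpos : ℤ → ℂ := fun k => if k ≤ 0 then cTwoSided k else 0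

lemma Theta_cTwoSided_le (n : ℕ) : Theta cTwoSided n ≤ 3 * (2 / 3) ^ n := by
  rcases n with _ | n
  · norm_num [Theta_zero, symDiff, cTwoSided]
  · rw [Theta_succ_eq_sum cTwoSided dyadicDecay dyadicSpike (fun _ hm => cTwoSided_natCast hm)
      (fun m _ => cTwoSided_neg_natCast m), sum_add_distrib, sum_abs_sub_dyadicDecay]
    linarith [sum_abs_sub_dyadicSpike_le n, pow_succ (2 / 3 : ℝ) n]

lemma Theta_cNonneg_le (n : ℕ) : Theta cNonneg n ≤ 3 * (2 / 3) ^ n := by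
  rcases n with _ | n
  · norm_num [Theta_zero, symDiff, cNonneg, cTwoSided]
  · rw [Theta_succ_eq_sum cNonneg dyadicDecay 0
      (fun m hm => by simp [cNonneg, cTwoSided_natCast hm])
      (fun m hm => by simp [cNonneg, hm.ne']), sum_add_distrib, sum_abs_sub_dyadicDecay]
    simp only [Pi.zero_apply, sub_self, abs_zero, sum_const_zero, add_zero]
    linarith [pow_succ (2 / 3 : ℝ) n, pow_nonneg (by norm_num : (0 : ℝ) ≤ 2 / 3) n]

lemma le_Theta_cNonpos (n : ℕ) : (2 / 3) ^ (n + 1) ≤ Theta cNonpos (n + 2) := by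
  rw [Theta_succ_eq_sum cNonpos 0 dyadicSpike (fun m hm => by simp [cNonpos, hm.ne'])
    (fun m _ => by simp [cNonpos, cTwoSided_neg_natCast])]
  simpa using le_sum_abs_sub_dyadicSpike n

lemma ofReal_le_hatAvg_of_eq_cTwoSided (a : ℤ → ℂ) (ha : ∀ j : ℕ, a j = cTwoSided j)
    (n : ℕ) :
    ENNReal.ofReal ((2 / 3) ^ n / 2) ≤ hatAvg a n := by
  refine ofReal_div_two_le_hatAvg a n _ (fun j _ => ?_) (fun j h₁ h₂ => ?_)
  · rcases j.eq_zero_or_pos with rfl | hj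
    · rw [ha, Nat.cast_zero, cTwoSided_zero, Complex.zero_re]
    · rw [ha, cTwoSided_natCast hj, Complex.ofReal_re]
      exact pow_nonneg (by norm_num) _
  · rw [ha, cTwoSided_natCast (Nat.one_le_two_pow.trans h₁), dyadicDecay_of_mem h₁ h₂]

lemma hasSum_norm_cNonpos : HasSum (fun j => ‖cNonpos j‖) 3 := by
  have hg : Function.Injective fun i : ℕ => -(2 ^ i : ℤ) := fun i j h => by
    simpa using h
  rw [← hg.hasSum_iff]
  · convert hasSum_geometric_of_lt_one (r := (2 / 3 : ℝ)) (by norm_num) (by norm_num) using 1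
    · funext i
      have : -(2 ^ i : ℤ) = -((2 ^ i : ℕ) : ℤ) := by push_cast; rfl
      simp [cNonpos, this, cTwoSided_neg_natCast, dyadicSpike_two_pow]
    · norm_num
  · intro j hj
    rcases le_or_gt j 0 with h | h
    · obtain ⟨m, rfl⟩ := Int.exists_eq_neg_ofNat h
      rw [cNonpos, if_pos h, cTwoSided_neg_natCast, dyadicSpike, if_neg, Complex.ofReal_zero,
        norm_zero]
      exact fun hm => hj ⟨Nat.log 2 m, by simp only [neg_inj]; exact_mod_cast hm⟩
    · simp [cNonpos, h.not_ge]

theorem not_gmBar_cNonpos : ¬ GMBar cNonpos := by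
  rintro ⟨C, hC, h⟩
  obtain ⟨n, hn⟩ := pow_unbounded_of_one_lt (3 * C) (by norm_num : (1 : ℝ) < 4 / 3)
  have hle := (le_Theta_cNonpos n).trans
    (h.Theta_le_of_hasSum_norm hC.le hasSum_norm_cNonpos (n + 2))
  rw [le_div_iff₀ (by positivity)] at hle
  have hpow : (2 / 3 : ℝ) ^ (n + 1) * 2 ^ (n + 2) = 8 / 3 * (4 / 3) ^ n := by
    rw [show (4 / 3 : ℝ) = 2 / 3 * 2 by norm_num, mul_pow]
    ring
  linarith [pow_pos (by norm_num : (0 : ℝ) < 4 / 3) n]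

theorem gmBar_cNonneg : GMBar cNonneg :=
  ⟨6, by norm_num, gmBarWith_of_Theta_le (fun n => (2 / 3) ^ n / 2) (by norm_num)
    (fun n => by linarith [Theta_cNonneg_le n])
    (ofReal_le_hatAvg_of_eq_cTwoSided _ fun j => if_pos j.cast_nonneg)⟩

theorem gmBar_cTwoSided : GMBar cTwoSided :=
  ⟨6, by norm_num, gmBarWith_of_Theta_le (fun n => (2 / 3) ^ n / 2) (by norm_num)
    (fun n => by linarith [Theta_cTwoSided_le n])
    (ofReal_le_hatAvg_of_eq_cTwoSided _ fun _ => rfl)⟩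

/-- The one-sided sequence supported on `k ≤ 0` fails `GM-bar`, the one-sided
sequence supported on `k ≥ 0` satisfies `GM-bar`, yet the full two-sided
sequence satisfies `GM-bar`. -/
theorem two_sided_compensation :
    ¬ GMBar (fun k => if k ≤ 0 then cTwoSided k else 0) ∧
    GMBar (fun k => if 0 ≤ k then cTwoSided k else 0) ∧
    GMBar cTwoSided :=
  ⟨not_gmBar_cNonpos, gmBar_cNonneg, gmBar_cTwoSided⟩
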